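/- Let α ∈ (0,1), s ≥ 1, and f ∈ E_{s-1} (zero-average values, weight e^{αt}). Define u(t) = ∫_0^t e^{(t-τ)Δ} f(τ) dτ. Then u ∈ E_s and ‖u‖_{E_s} ≤ C(α) ‖f‖_{E_{s-1}}, i.e. sup_{t≥0} e^{αt} ‖u(t)‖_{H^s} ≤ C(α) sup_{t≥0} e^{αt} ‖f(t)‖_{H^{s-1}}. -/

import Mathlib

/-! Mode by mode, `|ξ| e^{-r|ξ|²} ≤ smoothingKernel γ r ~ r^{-1/2} e^{-γr}` for `ξ ≠ 0`, where
`α < γ < 1`; this is the smoothing estimate of `e^{rΔ}` from `H^{s-1}` to `H^s` on zero-average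
functions, so `⟨ξ⟩^s |û(t,ξ)| ≤ ∫₀ᵗ k(t-τ) ⟨ξ⟩^{s-1} |f̂(τ,ξ)| dτ` with `k = smoothingKernel γ`.
Cauchy–Schwarz for the measure `k(t-τ) dτ`, with the weight `e^{ατ}` put on `f̂`, splits off
`A = ∫₀ᵗ k(t-τ) e^{-ατ} dτ`; summing over `ξ` then gives `‖u(t)‖²_{H^s} ≤ A · K² A`.
Finally `A ≤ C e^{-αt}`, because `∫₀^∞ r^{-1/2} e^{-(γ-α)r} dr = Γ(1/2) (γ-α)^{-1/2}`. -/

noncomputable section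

/-- Euclidean norm of a lattice vector. -/
def latNorm {d : ℕ} (ξ : Fin d → ℤ) : ℝ := Real.sqrt (∑ i, ((ξ i : ℝ)) ^ 2)

/-- Japanese bracket `⟨ξ⟩ = max (1, |ξ|)`. -/
def jb {d : ℕ} (ξ : Fin d → ℤ) : ℝ := max 1 (latNorm ξ)

/-- Euclidean norm of a vector of Fourier coefficients in `ℂ^n`. -/
def cnorm {n : ℕ} (a : Fin n → ℂ) : ℝ := Real.sqrt (∑ j, ‖a j‖ ^ 2)

/-- Sobolev `H^s` norm via Fourier coefficients. -/
def sobNorm {d n : ℕ} (s : ℝ) (u : (Fin d → ℤ) → Fin n → ℂ) : ℝ :=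
  Real.sqrt (∑' ξ : Fin d → ℤ, jb ξ ^ (2 * s) * cnorm (u ξ) ^ 2)

/-- The Duhamel integral `u(t) = ∫₀ᵗ e^{(t-τ)Δ} f(τ) dτ`, computed mode-wise. -/
def duhamel {d n : ℕ} (f : ℝ → (Fin d → ℤ) → Fin n → ℂ) (t : ℝ) :
    (Fin d → ℤ) → Fin n → ℂ :=
  fun ξ j => ∫ τ in (0 : ℝ)..t, Real.exp (-(t - τ) * latNorm ξ ^ 2) • f τ ξ j

open MeasureTheory Real Set

lemma one_le_latNorm {d : ℕ} {ξ : Fin d → ℤ} (hξ : ξ ≠ 0) : 1 ≤ latNorm ξ := by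
  obtain ⟨i, hi⟩ := Function.ne_iff.1 hξ
  have hi_sq : (1 : ℝ) ≤ (ξ i : ℝ) ^ 2 := by
    have : (1 : ℤ) ≤ ξ i ^ 2 := by nlinarith [Int.one_le_abs hi, sq_abs (ξ i)]
    exact_mod_cast this
  exact one_le_sqrt.2 <| hi_sq.trans <|
    Finset.single_le_sum (fun k _ => sq_nonneg (ξ k : ℝ)) (Finset.mem_univ i)

lemma jb_eq_latNorm {d : ℕ} {ξ : Fin d → ℤ} (hξ : ξ ≠ 0) : jb ξ = latNorm ξ :=
  max_eq_right (one_le_latNorm hξ)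

lemma jb_pos {d : ℕ} (ξ : Fin d → ℤ) : 0 < jb ξ :=
  one_pos.trans_le (le_max_left _ _)

lemma jb_rpow_two_mul {d : ℕ} (ξ : Fin d → ℤ) (s : ℝ) : jb ξ ^ (2 * s) = (jb ξ ^ s) ^ 2 := by
  rw [mul_comm, rpow_mul (jb_pos ξ).le, rpow_two]

lemma cnorm_eq_norm_toLp {n : ℕ} (a : Fin n → ℂ) : cnorm a = ‖WithLp.toLp 2 a‖ := by
  rw [EuclideanSpace.norm_eq]; rfl

lemma cnorm_nonneg {n : ℕ} (a : Fin n → ℂ) : 0 ≤ cnorm a := sqrt_nonneg _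

lemma continuous_cnorm {n : ℕ} : Continuous (cnorm : (Fin n → ℂ) → ℝ) := by
  simp only [funext cnorm_eq_norm_toLp]
  exact continuous_norm.comp (PiLp.continuousLinearEquiv 2 ℂ (fun _ : Fin n => ℂ)).symm.continuous

lemma sobNorm_nonneg {d n : ℕ} (s : ℝ) (u : (Fin d → ℤ) → Fin n → ℂ) : 0 ≤ sobNorm s u :=
  sqrt_nonneg _

lemma cnorm_zero {n : ℕ} : cnorm (0 : Fin n → ℂ) = 0 := by
  simp [cnorm]

lemma cnorm_smul_of_nonneg {n : ℕ} {c : ℝ} (hc : 0 ≤ c) (a : Fin n → ℂ) :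
    cnorm (fun j => c • a j) = c * cnorm a := by
  rw [cnorm_eq_norm_toLp, cnorm_eq_norm_toLp, ← norm_smul_of_nonneg hc]
  rfl

lemma cnorm_intervalIntegral_le {n : ℕ} {g : ℝ → Fin n → ℂ} (hg : Continuous g) {a b : ℝ}
    (hab : a ≤ b) : cnorm (fun j => ∫ τ in a..b, g τ j) ≤ ∫ τ in a..b, cnorm (g τ) := by
  have hg' : IntervalIntegrable (fun τ => WithLp.toLp 2 (g τ)) volume a b :=
    ((PiLp.continuousLinearEquiv 2 ℂ (fun _ : Fin n => ℂ)).symm.continuous.comp hg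
      ).intervalIntegrable a b
  have hcomm : WithLp.toLp 2 (fun j => ∫ τ in a..b, g τ j) =
      ∫ τ in a..b, WithLp.toLp 2 (g τ) := by
    ext j
    exact (EuclideanSpace.proj (𝕜 := ℂ) j).intervalIntegral_comp_comm hg'
  simp only [cnorm_eq_norm_toLp, hcomm]
  exact intervalIntegral.norm_integral_le_integral_norm hab

lemma mul_exp_neg_mul_sq_le {c : ℝ} (hc : 0 < c) (x : ℝ) :
    x * exp (-(c * x ^ 2)) ≤ (2 * √c)⁻¹ := by
  have hlin : 2 * √c * x ≤ exp (c * x ^ 2) := by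
    nlinarith [add_one_le_exp (c * x ^ 2), sq_nonneg (1 - √c * x), sq_sqrt hc.le]
  calc x * exp (-(c * x ^ 2)) = (2 * √c)⁻¹ * ((2 * √c * x) * exp (-(c * x ^ 2))) := by
        field_simp
    _ ≤ (2 * √c)⁻¹ * (exp (c * x ^ 2) * exp (-(c * x ^ 2))) := by gcongr
    _ = (2 * √c)⁻¹ := by rw [← exp_add, add_neg_cancel, exp_zero, mul_one]

lemma intervalIntegral_rpow_mul_exp_neg_le {a c M : ℝ} (ha : 0 < a) (hc : 0 < c) (hM : 0 ≤ M) :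
    ∫ x in (0 : ℝ)..M, x ^ (a - 1) * exp (-(c * x)) ≤ (1 / c) ^ a * Gamma a := by
  have key := integral_rpow_mul_exp_neg_mul_Ioi ha hc
  have hint : IntegrableOn (fun x => x ^ (a - 1) * exp (-(c * x))) (Ioi 0) :=
    .of_integral_ne_zero (by rw [key]; positivity)
  rw [intervalIntegral.integral_of_le hM, ← key]
  refine setIntegral_mono_set hint ?_ Ioc_subset_Ioi_self.eventuallyLE
  filter_upwards [ae_restrict_mem measurableSet_Ioi] with x hx
  exact mul_nonneg (rpow_nonneg hx.le _) (exp_nonneg _)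

def smoothingKernel (γ r : ℝ) : ℝ := (2 * √(1 - γ))⁻¹ * (r ^ (-(1 / 2) : ℝ) * exp (-(γ * r)))

lemma smoothingKernel_nonneg (γ : ℝ) {r : ℝ} (hr : 0 ≤ r) : 0 ≤ smoothingKernel γ r := by
  unfold smoothingKernel; have := rpow_nonneg hr (-(1 / 2) : ℝ); positivity

lemma intervalIntegrable_smoothingKernel_sub (γ t a b : ℝ) :
    IntervalIntegrable (fun τ => smoothingKernel γ (t - τ)) volume a b := by
  have hK : IntervalIntegrable (smoothingKernel γ) volume (t - a) (t - b) :=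
    ((intervalIntegral.intervalIntegrable_rpow' (by norm_num)).mul_continuousOn
      (by fun_prop : Continuous fun r => exp (-(γ * r))).continuousOn).const_mul _
  simpa using hK.comp_sub_left t

lemma mul_exp_le_smoothingKernel {γ L r : ℝ} (hγ0 : 0 ≤ γ) (hγ1 : γ < 1) (hL : 1 ≤ L)
    (hr : 0 < r) : L * exp (-r * L ^ 2) ≤ smoothingKernel γ r := by
  have hc : 0 < (1 - γ) * r := by nlinarith
  have hdecay : exp (-(γ * r * L ^ 2)) ≤ exp (-(γ * r)) := by
    have := le_mul_of_one_le_right (mul_nonneg hγ0 hr.le) (one_le_pow₀ (n := 2) hL)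
    gcongr
  have hpeak : L * exp (-((1 - γ) * r * L ^ 2)) ≤ (2 * √(1 - γ))⁻¹ * r ^ (-(1 / 2) : ℝ) := by
    have hsplit : (2 * √(1 - γ))⁻¹ * r ^ (-(1 / 2) : ℝ) = (2 * √((1 - γ) * r))⁻¹ := by
      rw [rpow_neg hr.le, ← sqrt_eq_rpow, sqrt_mul (by linarith), ← mul_inv, mul_assoc]
    rw [hsplit]
    exact mul_exp_neg_mul_sq_le hc L
  calc L * exp (-r * L ^ 2)
      = exp (-(γ * r * L ^ 2)) * (L * exp (-((1 - γ) * r * L ^ 2))) := by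
        rw [mul_left_comm, ← exp_add]; ring_nf
    _ ≤ exp (-(γ * r)) * ((2 * √(1 - γ))⁻¹ * r ^ (-(1 / 2) : ℝ)) := by
        gcongr
    _ = smoothingKernel γ r := by unfold smoothingKernel; ring

lemma integral_smoothingKernel_mul_exp_le {α γ t : ℝ} (hαγ : α < γ) (ht : 0 ≤ t) :
    ∫ τ in (0 : ℝ)..t, smoothingKernel γ (t - τ) * exp (-(α * τ)) ≤
      (2 * √(1 - γ))⁻¹ * ((1 / (γ - α)) ^ (1 / 2 : ℝ) * Gamma (1 / 2)) * exp (-(α * t)) := by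
  have hfactor : ∀ τ, smoothingKernel γ (t - τ) * exp (-(α * τ)) =
      ((2 * √(1 - γ))⁻¹ * exp (-(α * t))) *
        ((t - τ) ^ ((1 / 2 : ℝ) - 1) * exp (-((γ - α) * (t - τ)))) := by
    intro τ
    unfold smoothingKernel
    have hexp : exp (-(γ * (t - τ))) * exp (-(α * τ)) =
        exp (-(α * t)) * exp (-((γ - α) * (t - τ))) := by
      rw [← exp_add, ← exp_add]; ring_nf
    rw [show (1 / 2 : ℝ) - 1 = -(1 / 2) by norm_num]
    linear_combination ((2 * √(1 - γ))⁻¹ * (t - τ) ^ (-(1 / 2) : ℝ)) * hexp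
  simp_rw [hfactor]
  rw [intervalIntegral.integral_const_mul,
    intervalIntegral.integral_comp_sub_left (fun r => r ^ ((1 / 2 : ℝ) - 1) * exp (-((γ - α) * r))),
    sub_self, sub_zero]
  calc _ ≤ ((2 * √(1 - γ))⁻¹ * exp (-(α * t))) * ((1 / (γ - α)) ^ (1 / 2 : ℝ) * Gamma (1 / 2)) := by
        gcongr
        exact intervalIntegral_rpow_mul_exp_neg_le (by norm_num) (by linarith) ht
    _ = _ := by ring

lemma sq_intervalIntegral_mul_le {a b : ℝ} (hab : a ≤ b) {k w g : ℝ → ℝ}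
    (hk : ∀ x ∈ Icc a b, 0 ≤ k x) (hw : ∀ x, 0 < w x)
    (h1 : IntervalIntegrable (fun x => k x * (w x)⁻¹) volume a b)
    (h2 : IntervalIntegrable (fun x => k x * g x) volume a b)
    (h3 : IntervalIntegrable (fun x => k x * (w x * g x ^ 2)) volume a b) :
    (∫ x in a..b, k x * g x) ^ 2 ≤
      (∫ x in a..b, k x * (w x)⁻¹) * ∫ x in a..b, k x * (w x * g x ^ 2) := by
  set A := ∫ x in a..b, k x * (w x)⁻¹
  set B := ∫ x in a..b, k x * g x
  set C := ∫ x in a..b, k x * (w x * g x ^ 2)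
  have hquad : ∀ y : ℝ, 0 ≤ A * (y * y) + 2 * B * y + C := by
    intro y
    have hexpand : ∫ x in a..b, k x * (w x)⁻¹ * (y + w x * g x) ^ 2 =
        A * (y * y) + 2 * B * y + C := calc
      _ = ∫ x in a..b, (k x * (w x)⁻¹ * (y * y) + 2 * y * (k x * g x)) +
            k x * (w x * g x ^ 2) := intervalIntegral.integral_congr fun x _ => by
        have := (hw x).ne'
        field_simp
        ring
      _ = A * (y * y) + 2 * B * y + C := by
        rw [intervalIntegral.integral_add ((h1.mul_const _).add (h2.const_mul _)) h3,
          intervalIntegral.integral_add (h1.mul_const _) (h2.const_mul _),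
          intervalIntegral.integral_mul_const, intervalIntegral.integral_const_mul]
        ring
    rw [← hexpand]
    exact intervalIntegral.integral_nonneg hab fun x hx =>
      mul_nonneg (mul_nonneg (hk x hx) (inv_nonneg.2 (hw x).le)) (sq_nonneg _)
  have := discrim_le_zero hquad
  rw [discrim] at this
  nlinarith

lemma sum_sq_le_sobNorm_sq {d n : ℕ} {s : ℝ} {u : (Fin d → ℤ) → Fin n → ℂ}
    (hu : Summable fun ξ => jb ξ ^ (2 * s) * cnorm (u ξ) ^ 2) (F : Finset (Fin d → ℤ)) :
    ∑ ξ ∈ F, (jb ξ ^ s * cnorm (u ξ)) ^ 2 ≤ sobNorm s u ^ 2 := by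
  have hnonneg : ∀ ξ, 0 ≤ jb ξ ^ (2 * s) * cnorm (u ξ) ^ 2 := fun ξ => by
    have := rpow_nonneg (jb_pos ξ).le (2 * s); positivity
  rw [sobNorm, sq_sqrt (tsum_nonneg hnonneg)]
  simp only [mul_pow, ← jb_rpow_two_mul]
  exact hu.sum_le_tsum F fun ξ _ => hnonneg ξ

lemma exp_mul_sum_sq_le {d n : ℕ} {s a K : ℝ} {u : (Fin d → ℤ) → Fin n → ℂ}
    (hu : Summable fun ξ => jb ξ ^ (2 * s) * cnorm (u ξ) ^ 2) (hK : exp a * sobNorm s u ≤ K)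
    (F : Finset (Fin d → ℤ)) :
    exp a * ∑ ξ ∈ F, (jb ξ ^ s * cnorm (u ξ)) ^ 2 ≤ K ^ 2 * exp (-a) := by
  have hcancel : exp a * exp (-a) = 1 := by rw [← exp_add, add_neg_cancel, exp_zero]
  have hsob : sobNorm s u ≤ K * exp (-a) := by
    calc sobNorm s u = exp (-a) * (exp a * sobNorm s u) := by
          rw [← mul_assoc, mul_comm (exp (-a)), hcancel, one_mul]
      _ ≤ K * exp (-a) := by rw [mul_comm K]; gcongr
  calc exp a * ∑ ξ ∈ F, (jb ξ ^ s * cnorm (u ξ)) ^ 2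
      ≤ exp a * (K * exp (-a)) ^ 2 := by
        gcongr
        exact (sum_sq_le_sobNorm_sq hu F).trans (pow_le_pow_left₀ (sobNorm_nonneg s u) hsob 2)
    _ = K ^ 2 * exp (-a) * (exp a * exp (-a)) := by ring
    _ = K ^ 2 * exp (-a) := by rw [hcancel, mul_one]

section Duhamel

variable {d n : ℕ} {f : ℝ → (Fin d → ℤ) → Fin n → ℂ} {s t α γ K : ℝ}

lemma duhamel_apply_zero (hzero : ∀ τ, 0 ≤ τ → f τ 0 = 0) (ht : 0 ≤ t) :
    duhamel f t 0 = 0 := by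
  funext j
  refine (intervalIntegral.integral_congr fun τ hτ => ?_).trans intervalIntegral.integral_zero
  rw [uIcc_of_le ht] at hτ
  simp [hzero τ hτ.1]

lemma cnorm_duhamel_le (hf : ∀ ξ j, Continuous fun τ => f τ ξ j) (ht : 0 ≤ t)
    (ξ : Fin d → ℤ) :
    cnorm (duhamel f t ξ) ≤
      ∫ τ in (0 : ℝ)..t, exp (-(t - τ) * latNorm ξ ^ 2) * cnorm (f τ ξ) := by
  refine (cnorm_intervalIntegral_le (g := fun τ j => exp (-(t - τ) * latNorm ξ ^ 2) • f τ ξ j)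
    (continuous_pi fun j => ?_) ht).trans_eq ?_
  · exact (continuous_exp.comp (by fun_prop)).smul (hf ξ j)
  · exact intervalIntegral.integral_congr fun τ _ => cnorm_smul_of_nonneg (exp_pos _).le _

lemma continuous_cnorm_apply (hf : ∀ ξ j, Continuous fun τ => f τ ξ j) (ξ : Fin d → ℤ) :
    Continuous fun τ => cnorm (f τ ξ) :=
  continuous_cnorm.comp (continuous_pi (hf ξ))

lemma jb_rpow_mul_cnorm_duhamel_le (hf : ∀ ξ j, Continuous fun τ => f τ ξ j)
    (hzero : ∀ τ, 0 ≤ τ → f τ 0 = 0) (hγ0 : 0 ≤ γ) (hγ1 : γ < 1) (ht : 0 ≤ t)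
    (ξ : Fin d → ℤ) :
    jb ξ ^ s * cnorm (duhamel f t ξ) ≤
      ∫ τ in (0 : ℝ)..t, smoothingKernel γ (t - τ) * (jb ξ ^ (s - 1) * cnorm (f τ ξ)) := by
  have hc := continuous_cnorm_apply hf ξ
  rcases eq_or_ne ξ 0 with rfl | hξ
  · rw [duhamel_apply_zero hzero ht, cnorm_zero, mul_zero]
    exact intervalIntegral.integral_nonneg ht fun τ hτ =>
      mul_nonneg (smoothingKernel_nonneg γ (sub_nonneg.2 hτ.2))
        (mul_nonneg (rpow_nonneg (jb_pos 0).le _) (cnorm_nonneg _))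
  have hsplit : jb ξ ^ s = jb ξ ^ (s - 1) * latNorm ξ := by
    rw [← jb_eq_latNorm hξ, ← rpow_add_one (jb_pos ξ).ne', sub_add_cancel]
  calc jb ξ ^ s * cnorm (duhamel f t ξ)
      ≤ ∫ τ in (0 : ℝ)..t, jb ξ ^ s * (exp (-(t - τ) * latNorm ξ ^ 2) * cnorm (f τ ξ)) := by
        rw [intervalIntegral.integral_const_mul]
        exact mul_le_mul_of_nonneg_left (cnorm_duhamel_le hf ht ξ) (rpow_nonneg (jb_pos ξ).le _)
    _ ≤ ∫ τ in (0 : ℝ)..t, smoothingKernel γ (t - τ) * (jb ξ ^ (s - 1) * cnorm (f τ ξ)) := by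
        refine intervalIntegral.integral_mono_on_of_le_Ioo ht
          (Continuous.intervalIntegrable (by fun_prop) _ _)
          ((intervalIntegrable_smoothingKernel_sub γ t 0 t).mul_continuousOn
            (continuous_const.mul hc).continuousOn)
          fun τ hτ => ?_
        have hkernel := mul_exp_le_smoothingKernel hγ0 hγ1 (one_le_latNorm hξ)
          (sub_pos.2 hτ.2)
        have hgτ : 0 ≤ jb ξ ^ (s - 1) * cnorm (f τ ξ) :=
          mul_nonneg (rpow_nonneg (jb_pos ξ).le _) (cnorm_nonneg _)
        rw [hsplit]
        nlinarith

lemma jb_rpow_mul_cnorm_duhamel_sq_le (hf : ∀ ξ j, Continuous fun τ => f τ ξ j)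
    (hzero : ∀ τ, 0 ≤ τ → f τ 0 = 0) (hγ0 : 0 ≤ γ) (hγ1 : γ < 1) (ht : 0 ≤ t)
    (ξ : Fin d → ℤ) :
    (jb ξ ^ s * cnorm (duhamel f t ξ)) ^ 2 ≤
      (∫ τ in (0 : ℝ)..t, smoothingKernel γ (t - τ) * exp (-(α * τ))) *
        ∫ τ in (0 : ℝ)..t,
          smoothingKernel γ (t - τ) * (exp (α * τ) * (jb ξ ^ (s - 1) * cnorm (f τ ξ)) ^ 2) := by
  have hc := continuous_cnorm_apply hf ξ
  have hk := intervalIntegrable_smoothingKernel_sub γ t 0 t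
  have hA : IntervalIntegrable (fun τ => smoothingKernel γ (t - τ) * (exp (α * τ))⁻¹)
      volume 0 t := by
    simpa only [exp_neg] using hk.mul_continuousOn
      (by fun_prop : Continuous fun τ => exp (-(α * τ))).continuousOn
  have hcs := sq_intervalIntegral_mul_le ht
    (fun τ hτ => smoothingKernel_nonneg γ (sub_nonneg.2 hτ.2)) (fun τ => exp_pos (α * τ)) hA
    (hk.mul_continuousOn (g := fun τ => jb ξ ^ (s - 1) * cnorm (f τ ξ))
      (Continuous.continuousOn (by fun_prop)))
    (hk.mul_continuousOn (Continuous.continuousOn (by fun_prop)))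
  simp only [← exp_neg] at hcs
  exact (pow_le_pow_left₀ (mul_nonneg (rpow_nonneg (jb_pos ξ).le _) (cnorm_nonneg _))
    (jb_rpow_mul_cnorm_duhamel_le hf hzero hγ0 hγ1 ht ξ) 2).trans hcs

lemma sum_integral_smoothingKernel_mul_sq_le (hsum : ∀ τ, 0 ≤ τ →
      Summable fun ξ : Fin d → ℤ => jb ξ ^ (2 * (s - 1)) * cnorm (f τ ξ) ^ 2)
    (hbound : ∀ τ, 0 ≤ τ → exp (α * τ) * sobNorm (s - 1) (f τ) ≤ K)
    (hf : ∀ ξ j, Continuous fun τ => f τ ξ j) (ht : 0 ≤ t) (F : Finset (Fin d → ℤ)) :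
    ∑ ξ ∈ F, ∫ τ in (0 : ℝ)..t,
        smoothingKernel γ (t - τ) * (exp (α * τ) * (jb ξ ^ (s - 1) * cnorm (f τ ξ)) ^ 2) ≤
      K ^ 2 * ∫ τ in (0 : ℝ)..t, smoothingKernel γ (t - τ) * exp (-(α * τ)) := by
  have hk := intervalIntegrable_smoothingKernel_sub γ t 0 t
  have hint : ∀ ξ, IntervalIntegrable (fun τ => smoothingKernel γ (t - τ) *
      (exp (α * τ) * (jb ξ ^ (s - 1) * cnorm (f τ ξ)) ^ 2)) volume 0 t := fun ξ => by
    have := continuous_cnorm_apply hf ξ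
    exact hk.mul_continuousOn (Continuous.continuousOn (by fun_prop))
  rw [← intervalIntegral.integral_finsetSum fun ξ _ => hint ξ,
    ← intervalIntegral.integral_const_mul]
  refine intervalIntegral.integral_mono_on ht (by
    simpa only [Finset.sum_fn] using IntervalIntegrable.sum F fun ξ _ => hint ξ)
    ((hk.mul_continuousOn (Continuous.continuousOn (by fun_prop))).const_mul _) fun τ hτ => ?_
  have hkτ := smoothingKernel_nonneg γ (sub_nonneg.2 hτ.2)
  calc ∑ ξ ∈ F, smoothingKernel γ (t - τ) * (exp (α * τ) * (jb ξ ^ (s - 1) * cnorm (f τ ξ)) ^ 2)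
      = smoothingKernel γ (t - τ) *
          (exp (α * τ) * ∑ ξ ∈ F, (jb ξ ^ (s - 1) * cnorm (f τ ξ)) ^ 2) := by
        rw [Finset.mul_sum, Finset.mul_sum]
    _ ≤ smoothingKernel γ (t - τ) * (K ^ 2 * exp (-(α * τ))) :=
        mul_le_mul_of_nonneg_left (exp_mul_sum_sq_le (hsum τ hτ.1) (hbound τ hτ.1) F) hkτ
    _ = K ^ 2 * (smoothingKernel γ (t - τ) * exp (-(α * τ))) := by ring

lemma sobNorm_duhamel_le (hf : ∀ ξ j, Continuous fun τ => f τ ξ j)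
    (hzero : ∀ τ, 0 ≤ τ → f τ 0 = 0)
    (hsum : ∀ τ, 0 ≤ τ →
      Summable fun ξ : Fin d → ℤ => jb ξ ^ (2 * (s - 1)) * cnorm (f τ ξ) ^ 2)
    (hbound : ∀ τ, 0 ≤ τ → exp (α * τ) * sobNorm (s - 1) (f τ) ≤ K)
    (hγ0 : 0 ≤ γ) (hγ1 : γ < 1) (ht : 0 ≤ t) :
    sobNorm s (duhamel f t) ≤
      (∫ τ in (0 : ℝ)..t, smoothingKernel γ (t - τ) * exp (-(α * τ))) * K := by
  set A := ∫ τ in (0 : ℝ)..t, smoothingKernel γ (t - τ) * exp (-(α * τ))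
  have hA : 0 ≤ A := intervalIntegral.integral_nonneg ht fun τ hτ =>
    mul_nonneg (smoothingKernel_nonneg γ (sub_nonneg.2 hτ.2)) (exp_pos _).le
  have hK : 0 ≤ K := (mul_nonneg (exp_pos _).le (sobNorm_nonneg _ _)).trans (hbound 0 le_rfl)
  refine sqrt_le_iff.2 ⟨mul_nonneg hA hK, tsum_le_of_sum_le' (sq_nonneg _) fun F => ?_⟩
  calc ∑ ξ ∈ F, jb ξ ^ (2 * s) * cnorm (duhamel f t ξ) ^ 2
      = ∑ ξ ∈ F, (jb ξ ^ s * cnorm (duhamel f t ξ)) ^ 2 := by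
        simp only [jb_rpow_two_mul, mul_pow]
    _ ≤ ∑ ξ ∈ F, A * ∫ τ in (0 : ℝ)..t,
          smoothingKernel γ (t - τ) * (exp (α * τ) * (jb ξ ^ (s - 1) * cnorm (f τ ξ)) ^ 2) :=
        Finset.sum_le_sum fun ξ _ => jb_rpow_mul_cnorm_duhamel_sq_le hf hzero hγ0 hγ1 ht ξ
    _ ≤ A * (K ^ 2 * A) := by
        rw [← Finset.mul_sum]
        exact mul_le_mul_of_nonneg_left
          (sum_integral_smoothingKernel_mul_sq_le hsum hbound hf ht F) hA
    _ = (A * K) ^ 2 := by ring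

end Duhamel

/-- let `α ∈ (0,1)`, `s ≥ 1`, and let `f ∈ E_{s-1}` (continuous,
zero-average values and `sup_τ e^{ατ}‖f(τ)‖_{H^{s-1}} ≤ K`). Then
`u(t) = ∫₀ᵗ e^{(t-τ)Δ} f(τ) dτ` belongs to `E_s`:
`sup_{t ≥ 0} e^{αt}‖u(t)‖_{H^s} ≤ C(α) K`. -/
theorem stmt_17 {d n : ℕ} (α : ℝ) (hα : α ∈ Set.Ioo (0 : ℝ) 1) :
    ∃ C > 0, ∀ (s : ℝ), 1 ≤ s → ∀ (f : ℝ → (Fin d → ℤ) → Fin n → ℂ) (K : ℝ),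
      (∀ (ξ : Fin d → ℤ) (j : Fin n), Continuous fun τ : ℝ => f τ ξ j) →
      (∀ τ, 0 ≤ τ → f τ 0 = 0) →
      (∀ τ, 0 ≤ τ →
        Summable fun ξ : Fin d → ℤ => jb ξ ^ (2 * (s - 1)) * cnorm (f τ ξ) ^ 2) →
      (∀ τ, 0 ≤ τ → Real.exp (α * τ) * sobNorm (s - 1) (f τ) ≤ K) →
      ∀ t : ℝ, 0 ≤ t →
        Real.exp (α * t) * sobNorm s (duhamel f t) ≤ C * K := by
  obtain ⟨hα0, hα1⟩ := hα
  set γ := (1 + α) / 2 with hγ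
  have hαγ : 0 < γ - α := by linarith
  have hγ1 : 0 < 1 - γ := by linarith
  set C := (2 * √(1 - γ))⁻¹ * ((1 / (γ - α)) ^ (1 / 2 : ℝ) * Gamma (1 / 2))
  have hC : 0 < C := by have := sqrt_pos.2 hγ1; positivity
  refine ⟨C, hC, fun s _ f K hf hzero hsum hbound t ht => ?_⟩
  have hK : 0 ≤ K := (mul_nonneg (exp_pos _).le (sobNorm_nonneg _ _)).trans (hbound 0 le_rfl)
  calc exp (α * t) * sobNorm s (duhamel f t)
      ≤ exp (α * t) * ((∫ τ in (0 : ℝ)..t, smoothingKernel γ (t - τ) * exp (-(α * τ))) * K) := by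
        gcongr
        exact sobNorm_duhamel_le hf hzero hsum hbound (by linarith) (by linarith) ht
    _ ≤ exp (α * t) * (C * exp (-(α * t)) * K) := by
        gcongr
        exact integral_smoothingKernel_mul_exp_le (by linarith) ht
    _ = C * K * (exp (α * t) * exp (-(α * t))) := by ring
    _ = C * K := by rw [← exp_add, add_neg_cancel, exp_zero, mul_one]
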